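/- arXiv:1803.06765 — 3 statements merged into one kernel-verified Lean document; each statement's English description precedes it below -/
import Mathlib

section
/- For every b ∈ ℝ and every x ∈ ℝ, the scaled Huber function satisfies s_b(x) = inf_{v ∈ ℝ} ( |v| + (1/2) b² (x − v)² ), and this infimum is attained at some v ∈ ℝ. -/
/-- The Huber function: `s(x) = x²/2` for `|x| ≤ 1` and `s(x) = |x| - 1/2` for `|x| ≥ 1`. -/
noncomputable def huber (x : ℝ) : ℝ :=
  if |x| ≤ 1 then x ^ 2 / 2 else |x| - 1 / 2

/-- The scaled Huber function: `s_b(x) = s(b² x)/b²` for `b ≠ 0`, and `s_0 = 0`. -/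
noncomputable def scaledHuber (b x : ℝ) : ℝ :=
  if b = 0 then 0 else huber (b ^ 2 * x) / b ^ 2

lemma huber_le_aux (t w : ℝ) : huber t ≤ |w| + (t - w) ^ 2 / 2 := by
  unfold huber
  rcases abs_cases t with ⟨ht, _⟩ | ⟨ht, _⟩ <;>
  rcases abs_cases w with ⟨hw, _⟩ | ⟨hw, _⟩ <;>
  split_ifs with h <;> rw [ht] at * <;> rw [hw] <;> nlinarith [sq_nonneg (t - w - 1), sq_nonneg (t - w + 1), sq_nonneg w, sq_nonneg (t - w)]

lemma scaledHuber_le (b x v : ℝ) :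
    scaledHuber b x ≤ |v| + (1 / 2) * b ^ 2 * (x - v) ^ 2 := by
  unfold scaledHuber
  split_ifs with h
  · positivity
  · have hb : (0:ℝ) < b ^ 2 := by positivity
    rw [div_le_iff₀ hb]
    have := huber_le_aux (b ^ 2 * x) (b ^ 2 * v)
    have habs : |b ^ 2 * v| = b ^ 2 * |v| := by
      rw [abs_mul, abs_of_pos hb]
    nlinarith [this]

lemma scaledHuber_attained (b x : ℝ) :
    ∃ v : ℝ, scaledHuber b x = |v| + (1 / 2) * b ^ 2 * (x - v) ^ 2 := by
  unfold scaledHuber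
  by_cases hb : b = 0
  · exact ⟨0, by simp [hb]⟩
  · have hb2 : (0:ℝ) < b ^ 2 := by positivity
    simp only [hb, if_false]
    unfold huber
    split_ifs with h
    · refine ⟨0, ?_⟩
      rw [abs_zero]
      field_simp
      ring
    · push_neg at h
      rcases abs_cases (b ^ 2 * x) with ⟨ht, _⟩ | ⟨ht, htneg⟩
      · refine ⟨x - 1 / b ^ 2, ?_⟩
        have hxpos : 0 ≤ x - 1 / b ^ 2 := by
          rw [sub_nonneg, div_le_iff₀ hb2]
          nlinarith [ht]
        rw [abs_of_nonneg hxpos, ht]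
        field_simp
        ring
      · refine ⟨x + 1 / b ^ 2, ?_⟩
        have hxneg : x + 1 / b ^ 2 ≤ 0 := by
          rw [← neg_nonneg]
          have : 1 ≤ -(b ^ 2 * x) := by rw [← ht]; linarith
          rw [neg_add]
          have : 1 / b ^ 2 ≤ -x := by
            rw [div_le_iff₀ hb2]; nlinarith
          linarith
        rw [abs_of_nonpos hxneg, ht]
        field_simp
        ring

/-- The scaled Huber function equals the infimal convolution of `|·|` and `(1/2) b² (·)²`,
and the infimum is attained. -/
theorem scaledHuber_eq_iInf_and_attained (b x : ℝ) :
    scaledHuber b x = ⨅ v : ℝ, (|v| + (1 / 2) * b ^ 2 * (x - v) ^ 2) ∧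
    ∃ v : ℝ, scaledHuber b x = |v| + (1 / 2) * b ^ 2 * (x - v) ^ 2 := by
  obtain ⟨v₀, hv₀⟩ := scaledHuber_attained b x
  refine ⟨le_antisymm (le_ciInf fun v => scaledHuber_le b x v) ?_, v₀, hv₀⟩
  have hbdd : BddBelow (Set.range fun v : ℝ => |v| + (1 / 2) * b ^ 2 * (x - v) ^ 2) :=
    ⟨scaledHuber b x, by rintro _ ⟨v, rfl⟩; exact scaledHuber_le b x v⟩
  calc ⨅ v : ℝ, (|v| + (1 / 2) * b ^ 2 * (x - v) ^ 2)
      ≤ |v₀| + (1 / 2) * b ^ 2 * (x - v₀) ^ 2 := ciInf_le hbdd v₀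
    _ = scaledHuber b x := hv₀.symm
end

section
/- Let λ > 0, y ∈ ℝ, a ∈ ℝ, and b ∈ ℝ with b² ≤ a²/λ. Then the function f : ℝ → ℝ defined by f(x) = (1/2)(y − a x)² + λ φ_b(x) is convex on ℝ. -/
/-- The scaled MC penalty: `φ_b(x) = |x| - s_b(x)`. -/
noncomputable def mcPenalty (b x : ℝ) : ℝ :=
  |x| - scaledHuber b x

/-!
Writing `(t)₊ = max t 0`, the Huber function is `s(x) = x²/2 - ((|x| - 1)₊)²/2`, hence
`φ_b(x) = |x| - b²x²/2 + ((b²|x| - 1)₊)² / (2b²)`. So `f` is the quadratic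
`(a² - λb²)/2 · x² - a y x + y²/2`, convex because `λb² ≤ a²`, plus `λ|x|`, plus a nonnegative
multiple of the square of the nonnegative convex function `(b²|x| - 1)₊`.
-/

open Set

theorem huber_eq_sub_sq_max (x : ℝ) : huber x = x ^ 2 / 2 - max (|x| - 1) 0 ^ 2 / 2 := by
  unfold huber
  split_ifs with hx
  · rw [max_eq_right (by linarith)]
    ring
  · rw [max_eq_left (by linarith)]
    linear_combination (1 / 2 : ℝ) * sq_abs x

-- Also valid for `b = 0`, where the division by `b²` yields `0`.
theorem scaledHuber_eq_sub_sq_max (b x : ℝ) :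
    scaledHuber b x = b ^ 2 * x ^ 2 / 2 - max (b ^ 2 * |x| - 1) 0 ^ 2 / (2 * b ^ 2) := by
  unfold scaledHuber
  split_ifs with hb
  · simp [hb]
  rw [huber_eq_sub_sq_max, abs_mul, abs_of_nonneg (sq_nonneg b)]
  field_simp

theorem ConvexOn.sq_max_zero {𝕜 E : Type*} [CommRing 𝕜] [LinearOrder 𝕜] [IsStrictOrderedRing 𝕜]
    [AddCommGroup E] [Module 𝕜 E] {s : Set E} {f : E → 𝕜}
    (hf : ConvexOn 𝕜 s f) : ConvexOn 𝕜 s fun x => max (f x) 0 ^ 2 :=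
  (hf.sup (convexOn_const 0 hf.1)).pow (fun _ _ => le_max_right _ _) 2

theorem convexOn_univ_quadratic {p : ℝ} (hp : 0 ≤ p) (q r : ℝ) :
    ConvexOn ℝ univ fun x : ℝ => p * x ^ 2 + q * x + r :=
  (((even_two.convexOn_pow).smul hp).add ((LinearMap.mul ℝ ℝ q).convexOn convex_univ)).add_const r

/-- If `b² ≤ a²/λ`, then `f(x) = (1/2)(y - a x)² + λ φ_b(x)` is convex. -/
theorem mcPenalty_leastSquares_convex (lam y a b : ℝ) (hlam : 0 < lam)
    (hb : b ^ 2 ≤ a ^ 2 / lam) :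
    ConvexOn ℝ Set.univ (fun x : ℝ => (1 / 2) * (y - a * x) ^ 2 + lam * mcPenalty b x) := by
  have hcurv : 0 ≤ (a ^ 2 - lam * b ^ 2) / 2 := by
    have := (le_div_iff₀' hlam).mp hb
    linarith
  have hquad := convexOn_univ_quadratic hcurv (-(a * y)) (y ^ 2 / 2)
  have habs : ConvexOn ℝ univ fun x : ℝ => lam * |x| := convexOn_univ_norm.smul hlam.le
  have hhinge : ConvexOn ℝ univ fun x : ℝ => lam / (2 * b ^ 2) * max (b ^ 2 * |x| - 1) 0 ^ 2 :=
    ((convexOn_univ_norm.smul (sq_nonneg b)).add_const (-1)).sq_max_zero.smul (by positivity)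
  refine ((hquad.add habs).add hhinge).congr fun x _ => ?_
  simp only [Pi.add_apply, mcPenalty, scaledHuber_eq_sub_sq_max]
  ring
end

section
/- Let λ > 0, a > 0, b > 0 with b² < a²/λ, and y ∈ ℝ. Then the point x* = firm(y/a; λ/a², 1/b²) is a global minimizer of the function f(x) = (1/2)(y − a x)² + λ φ_b(x); that is, f(x*) ≤ f(x) for all x ∈ ℝ. -/
/-- The firm threshold function with parameters `0 < λ < μ`. -/
noncomputable def firm (lam mu y : ℝ) : ℝ :=
  if |y| ≤ lam then 0
  else if |y| ≤ mu then mu * (|y| - lam) / (mu - lam) * Real.sign y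
  else y

/-- Auxiliary objective in normalized form. -/
noncomputable def firmAuxG (L mu u x : ℝ) : ℝ :=
  (1/2)*(x-u)^2 + L * (if |x| ≤ mu then |x| - x^2/(2*mu) else mu/2)

lemma firmAux_phi_ge (L mu x : ℝ) (hmu : 0 < mu) (hL : 0 ≤ L) :
    L * (|x| - x^2/(2*mu)) ≤ L * (if |x| ≤ mu then |x| - x^2/(2*mu) else mu/2) := by
  apply mul_le_mul_of_nonneg_left _ hL
  split_ifs with h
  · exact le_rfl
  · push_neg at h
    have hx : x^2 = |x|^2 := (sq_abs x).symm
    have key : |x| - x^2/(2*mu) = mu/2 - (|x|-mu)^2/(2*mu) := by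
      field_simp
      rw [hx]; ring
    rw [key]
    have : 0 ≤ (|x|-mu)^2/(2*mu) := by positivity
    linarith

lemma firmAux_core (L mu u : ℝ) (hL : 0 < L) (hmu : L < mu) (x : ℝ) :
    firmAuxG L mu u (firm L mu u) ≤ firmAuxG L mu u x := by
  have hmu0 : 0 < mu := hL.trans hmu
  have hc : 0 < mu - L := sub_pos.mpr hmu
  have hX : x^2 = |x|^2 := (sq_abs x).symm
  have hX0 : 0 ≤ |x| := abs_nonneg x
  have hxX : x ≤ |x| := le_abs_self x
  have hxX' : -x ≤ |x| := neg_le_abs x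
  have hlb := firmAux_phi_ge L mu x hmu0 hL.le
  unfold firm
  by_cases h1 : |u| ≤ L
  · -- t = 0
    rw [if_pos h1]
    unfold firmAuxG
    have h0 : |(0:ℝ)| ≤ mu := by simp [hmu0.le]
    rw [if_pos h0]
    have hux : u * x ≤ L * |x| := by
      calc u * x ≤ |u * x| := le_abs_self _
        _ = |u| * |x| := abs_mul u x
        _ ≤ L * |x| := mul_le_mul_of_nonneg_right h1 (abs_nonneg x)
    have heq : (1/2)*(x-u)^2 + L*(|x| - x^2/(2*mu)) - ((1/2)*((0:ℝ)-u)^2 + L*(|(0:ℝ)| - 0^2/(2*mu)))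
        = (mu-L)/(2*mu)*x^2 + (L*|x| - u*x) := by
      field_simp; ring
    have h2 : 0 ≤ (mu-L)/(2*mu)*x^2 := by positivity
    linarith
  · push_neg at h1
    rw [if_neg (not_le.mpr h1)]
    by_cases h2 : |u| ≤ mu
    · -- middle case
      rw [if_pos h2]
      have hu0 : u ≠ 0 := by intro h; rw [h] at h1; simp at h1; linarith
      have hwL : 0 ≤ |u| - L := by linarith
      have htau0 : 0 ≤ mu * (|u| - L) / (mu - L) := by positivity
      have htaumu : mu * (|u| - L) / (mu - L) ≤ mu := by
        rw [div_le_iff₀ hc]; nlinarith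
      rcases hu0.lt_or_gt with hneg | hpos
      · have hs : Real.sign u = -1 := Real.sign_of_neg hneg
        have hw : |u| = -u := abs_of_neg hneg
        rw [hs, hw]
        set t : ℝ := mu * (-u - L) / (mu - L) * (-1) with hts
        have habs : |t| = mu * (-u - L) / (mu - L) := by
          rw [hts, abs_mul]; rw [hw] at htau0; simp [abs_of_nonneg htau0]
        unfold firmAuxG
        rw [hw] at htaumu
        rw [habs, if_pos htaumu]
        have heq : (1/2)*(x-u)^2 + L*(|x| - x^2/(2*mu))
            - ((1/2)*(t-u)^2 + L*(mu * (-u - L) / (mu - L) - t^2/(2*mu)))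
            = (mu-L)/(2*mu)*(x - t)^2 + L*(|x| - (-1)*x) := by
          rw [hts]; field_simp; ring
        have hp1 : 0 ≤ (mu-L)/(2*mu)*(x - t)^2 := by positivity
        have hp2 : 0 ≤ L*(|x| - (-1)*x) := by
          apply mul_nonneg hL.le; linarith
        linarith
      · have hs : Real.sign u = 1 := Real.sign_of_pos hpos
        have hw : |u| = u := abs_of_pos hpos
        rw [hs, hw]
        set t : ℝ := mu * (u - L) / (mu - L) * 1 with hts
        have habs : |t| = mu * (u - L) / (mu - L) := by
          rw [hts, abs_mul]; rw [hw] at htau0; simp [abs_of_nonneg htau0]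
        unfold firmAuxG
        rw [hw] at htaumu
        rw [habs, if_pos htaumu]
        have heq : (1/2)*(x-u)^2 + L*(|x| - x^2/(2*mu))
            - ((1/2)*(t-u)^2 + L*(mu * (u - L) / (mu - L) - t^2/(2*mu)))
            = (mu-L)/(2*mu)*(x - t)^2 + L*(|x| - x) := by
          rw [hts]; field_simp; ring
        have hp1 : 0 ≤ (mu-L)/(2*mu)*(x - t)^2 := by positivity
        have hp2 : 0 ≤ L*(|x| - x) := by
          apply mul_nonneg hL.le; linarith
        linarith
    · -- outer case : t = u
      push_neg at h2
      rw [if_neg (not_le.mpr h2)]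
      unfold firmAuxG
      rw [if_neg (not_le.mpr h2)]
      by_cases h3 : |x| ≤ mu
      · rw [if_pos h3]
        have hwX : 0 ≤ |u| - |x| := by linarith
        have hsq : (|u| - |x|)^2 ≤ (x-u)^2 := by
          have h4 : |u| - |x| ≤ |u - x| := abs_sub_abs_le_abs_sub u x
          have h5 : (|u| - |x|)^2 ≤ |u - x|^2 := by
            apply pow_le_pow_left₀ hwX h4
          calc (|u| - |x|)^2 ≤ |u - x|^2 := h5
            _ = (u - x)^2 := sq_abs _
            _ = (x - u)^2 := by ring
        have heq : (1/2)*((|u|-|x|))^2 + L*(|x| - x^2/(2*mu)) - ((1/2)*(u-u)^2 + L*(mu/2))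
            = (1/(2*mu)) * (mu*(|u|-mu)*(|u|+mu-2*|x|) + (mu-L)*(mu-|x|)^2) := by
          field_simp
          rw [hX]; ring
        have hA : 0 ≤ mu*(|u|-mu)*(|u|+mu-2*|x|) :=
          mul_nonneg (mul_nonneg hmu0.le (by linarith)) (by linarith)
        have hB : 0 ≤ (mu-L)*(mu-|x|)^2 := mul_nonneg hc.le (sq_nonneg _)
        have hC : 0 ≤ (1:ℝ)/(2*mu) := by positivity
        have hp : 0 ≤ (1/(2*mu)) * (mu*(|u|-mu)*(|u|+mu-2*|x|) + (mu-L)*(mu-|x|)^2) :=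
          mul_nonneg hC (by linarith)
        linarith
      · rw [if_neg h3]
        nlinarith [sq_nonneg (x - u)]

lemma mcPenalty_eq (b : ℝ) (hb : b ≠ 0) (z : ℝ) :
    mcPenalty b z = if |z| ≤ 1/b^2 then |z| - z^2/(2*(1/b^2)) else (1/b^2)/2 := by
  have hb2 : (0:ℝ) < b^2 := by positivity
  have habs : |b ^ 2 * z| = b^2 * |z| := by
    rw [abs_mul, abs_of_pos hb2]
  have hcond : |b ^ 2 * z| ≤ 1 ↔ |z| ≤ 1/b^2 := by
    rw [habs, ← le_div_iff₀' hb2]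
  unfold mcPenalty scaledHuber huber
  rw [if_neg hb]
  split_ifs with h h2 h3
  · field_simp
  · exact absurd (hcond.mp h) h2
  · exact absurd (hcond.mpr h3) h
  · rw [habs]; field_simp; ring

/-- If `0 < λ`, `0 < a`, `0 < b`, and `b² < a²/λ`, then
`x* = firm(y/a; λ/a², 1/b²)` globally minimizes `f(x) = (1/2)(y - a x)² + λ φ_b(x)`. -/
theorem firm_minimizes_mcPenalty_leastSquares (lam a b y : ℝ)
    (hlam : 0 < lam) (ha : 0 < a) (hb : 0 < b) (hba : b ^ 2 < a ^ 2 / lam) :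
    ∀ x : ℝ,
      (1 / 2) * (y - a * firm (lam / a ^ 2) (1 / b ^ 2) (y / a)) ^ 2
          + lam * mcPenalty b (firm (lam / a ^ 2) (1 / b ^ 2) (y / a))
        ≤ (1 / 2) * (y - a * x) ^ 2 + lam * mcPenalty b x := by
  intro x
  have ha2 : (0:ℝ) < a^2 := by positivity
  have hb2 : (0:ℝ) < b^2 := by positivity
  have hL : 0 < lam / a^2 := by positivity
  have hba' : b^2 * lam < a^2 := by rw [lt_div_iff₀ hlam] at hba; linarith
  have hLmu : lam / a^2 < 1 / b^2 := by
    rw [div_lt_div_iff₀ ha2 hb2]; nlinarith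
  have heq : ∀ z : ℝ, (1/2)*(y-a*z)^2 + lam * mcPenalty b z
      = a^2 * firmAuxG (lam/a^2) (1/b^2) (y/a) z := by
    intro z
    rw [mcPenalty_eq b hb.ne' z]
    unfold firmAuxG
    split_ifs with h
    · field_simp; ring
    · field_simp; ring
  rw [heq, heq]
  exact mul_le_mul_of_nonneg_left (firmAux_core _ _ _ hL hLmu x) ha2.le
end
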